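/- Let 0 < q < 1, s ∈ ℝ, n ∈ ℕ and let p ≥ 1 be an integer. Then s·((D_q)^p H_{n,p})(x,s|q) - q^{p-n}·x·(D_q H_{n,p})(x,s|q) + q^{p-n}·{n}_q·H_{n,p}(x,s|q) = 0 as polynomials in x, where q^{p-n} denotes the real power of q and (D_q)^p is the p-fold iterated q-derivative. -/

import Mathlib

/-- The q-number `{n}_q = 1 + q + ⋯ + q^{n-1}`. -/
noncomputable def qNum (q : ℝ) (n : ℕ) : ℝ := ∑ k ∈ Finset.range n, q ^ k

/-- The q-factorial `{n}_q! = Π_{k=1}^n {k}_q`. -/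
noncomputable def qFact (q : ℝ) (n : ℕ) : ℝ := ∏ k ∈ Finset.range n, qNum q (k + 1)

/-- The even q-double factorial `{2k}_q!! = Π_{l=1}^k {2l}_q`. -/
noncomputable def qDoubleFact (q : ℝ) (k : ℕ) : ℝ := ∏ l ∈ Finset.range k, qNum q (2 * (l + 1))

/-- The q-Hermite polynomial `H_n(x,s|q) = Σ_{k=0}^{⌊n/2⌋} (-1)^k q^{k(k-1)}
({n}_q!/({n-2k}_q!·{2k}_q!!)) s^k x^{n-2k}`. -/
noncomputable def qHermite (q s : ℝ) (n : ℕ) : Polynomial ℝ :=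
  ∑ k ∈ Finset.range (n / 2 + 1),
    Polynomial.C ((-1 : ℝ) ^ k * q ^ (k * (k - 1)) *
        (qFact q n / (qFact q (n - 2 * k) * qDoubleFact q k)) * s ^ k) *
      Polynomial.X ^ (n - 2 * k)

/-- The q-derivative on polynomials: it sends `x^j` to `{j}_q x^{j-1}`. -/
noncomputable def qDeriv (q : ℝ) (f : Polynomial ℝ) : Polynomial ℝ :=
  f.sum fun j a => Polynomial.C (a * qNum q j) * Polynomial.X ^ (j - 1)

/-- The q-p-double factorial `{pk}_q!! = Π_{l=1}^k {pl}_q`. -/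
noncomputable def qPDoubleFact (q : ℝ) (p k : ℕ) : ℝ := ∏ l ∈ Finset.range k, qNum q (p * (l + 1))

/-- The doubly indexed Hermite polynomial
`H_{n,p}(x,s|q) = {n}_q!·Σ_{k=0}^{⌊n/p⌋} (-1)^k q^{p·k(k-1)/2} s^k x^{n-pk}/({pk}_q!!·{n-pk}_q!)`. -/
noncomputable def qHermiteDI (q s : ℝ) (n p : ℕ) : Polynomial ℝ :=
  Polynomial.C (qFact q n) *
    ∑ k ∈ Finset.range (n / p + 1),
      Polynomial.C ((-1 : ℝ) ^ k * q ^ (p * (k * (k - 1) / 2)) * s ^ k /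
          (qPDoubleFact q p k * qFact q (n - p * k))) *
        Polynomial.X ^ (n - p * k)

/-!
Write `H_{n,p} = Σ_k A_k x^{n-pk}`. Since `x D_q x^m = {m}_q x^m` and
`{n}_q - {m}_q = q^m {n-m}_q`, the last two terms of the equation multiply `x^{n-pk}` by
`q^{p-n} q^{n-pk} {pk}_q A_k`, which vanishes for `k = 0`, while `s D_q^p` sends `A_k x^{n-pk}`
to a multiple of `x^{n-p(k+1)}` and kills the top index `k = ⌊n/p⌋`. The sum therefore
telescopes, consecutive terms cancelling by the recurrence
`{p(k+1)}_q A_{k+1} = -q^{pk} s {n-pk}_q ⋯ {n-pk-p+1}_q A_k`, which comes from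
`{p(k+1)}_q!! = {pk}_q!! {p(k+1)}_q` and `binom(k+1, 2) = binom(k, 2) + k`.
-/

open Polynomial Finset

section QNumbers

variable {q : ℝ}

lemma qNum_zero (q : ℝ) : qNum q 0 = 0 := by simp [qNum]

lemma qNum_add (q : ℝ) (m k : ℕ) : qNum q (m + k) = qNum q m + q ^ m * qNum q k := by
  simp [qNum, sum_range_add, mul_sum, pow_add]

lemma qNum_pos (hq : 0 ≤ q) {m : ℕ} (hm : m ≠ 0) : 0 < qNum q m :=
  sum_pos' (fun k _ => pow_nonneg hq k) ⟨0, by simpa [Nat.pos_iff_ne_zero] using hm, by simp⟩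

lemma qFact_pos (hq : 0 ≤ q) (m : ℕ) : 0 < qFact q m :=
  prod_pos fun _ _ => qNum_pos hq (Nat.succ_ne_zero _)

lemma qPDoubleFact_pos (hq : 0 ≤ q) {p : ℕ} (hp : p ≠ 0) (k : ℕ) : 0 < qPDoubleFact q p k :=
  prod_pos fun _ _ => qNum_pos hq (mul_ne_zero hp (Nat.succ_ne_zero _))

noncomputable def qDescFact (q : ℝ) (m k : ℕ) : ℝ := ∏ i ∈ range k, qNum q (m - i)

lemma qDescFact_eq_zero_of_lt {m k : ℕ} (h : m < k) : qDescFact q m k = 0 :=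
  prod_eq_zero (mem_range.mpr h) (by rw [Nat.sub_self, qNum_zero])

lemma qDescFact_succ (q : ℝ) (m k : ℕ) :
    qDescFact q m (k + 1) = qNum q m * qDescFact q (m - 1) k := by
  rw [qDescFact, prod_range_succ', qDescFact, Nat.sub_zero, mul_comm]
  simp only [Nat.sub_sub, Nat.add_comm 1]

lemma qFact_succ (q : ℝ) (m : ℕ) : qFact q (m + 1) = qFact q m * qNum q (m + 1) :=
  prod_range_succ _ _

lemma qFact_mul_qDescFact (q : ℝ) (m k : ℕ) :
    qFact q m * qDescFact q (m + k) k = qFact q (m + k) := by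
  induction k with
  | zero => simp [qDescFact]
  | succ k ih =>
    rw [← add_assoc, qDescFact_succ, Nat.add_sub_cancel, mul_left_comm, ih, qFact_succ, mul_comm]

end QNumbers

section QDerivative

variable (q : ℝ)

lemma qDeriv_C_mul_X_pow (a : ℝ) (m : ℕ) :
    qDeriv q (C a * X ^ m) = C (a * qNum q m) * X ^ (m - 1) := by
  rw [C_mul_X_pow_eq_monomial, qDeriv, sum_monomial_index]
  simp

lemma X_mul_qDeriv_C_mul_X_pow (a : ℝ) (m : ℕ) :
    X * qDeriv q (C a * X ^ m) = C (a * qNum q m) * X ^ m := by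
  rw [qDeriv_C_mul_X_pow]
  cases m with
  | zero => simp [qNum_zero]
  | succ m => rw [Nat.add_sub_cancel]; ring

noncomputable def qDerivHom : AddMonoid.End ℝ[X] where
  toFun := qDeriv q
  map_zero' := by simp [qDeriv]
  map_add' f g := by
    unfold qDeriv
    rw [sum_add_index] <;> intros <;> simp [add_mul]

lemma qDeriv_sum {ι : Type*} (t : Finset ι) (f : ι → ℝ[X]) :
    qDeriv q (∑ i ∈ t, f i) = ∑ i ∈ t, qDeriv q (f i) :=
  map_sum (qDerivHom q) f t

lemma qDeriv_iterate_sum (k : ℕ) {ι : Type*} (t : Finset ι) (f : ι → ℝ[X]) :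
    (qDeriv q)^[k] (∑ i ∈ t, f i) = ∑ i ∈ t, (qDeriv q)^[k] (f i) :=
  map_sum (qDerivHom q ^ k) f t

lemma qDeriv_iterate_C_mul_X_pow (a : ℝ) (m k : ℕ) :
    (qDeriv q)^[k] (C a * X ^ m) = C (a * qDescFact q m k) * X ^ (m - k) := by
  induction k generalizing a m with
  | zero => simp [qDescFact]
  | succ k ih =>
    rw [Function.iterate_succ_apply, qDeriv_C_mul_X_pow, ih, qDescFact_succ, Nat.sub_sub,
      Nat.add_comm 1 k, mul_assoc]

end QDerivative

lemma sum_range_succ_add_eq_zero_of_telescope {M : Type*} [AddCommMonoid M] (f g : ℕ → M)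
    (N : ℕ) (h : ∀ k < N, f k + g (k + 1) = 0) (hf : f N = 0) (hg : g 0 = 0) :
    ∑ k ∈ range (N + 1), (f k + g k) = 0 := by
  rw [sum_add_distrib, sum_range_succ, sum_range_succ', hf, hg, add_zero, add_zero,
    ← sum_add_distrib]
  exact sum_eq_zero fun k hk => h k (mem_range.mp hk)

section DoublyIndexedHermite

variable {q : ℝ} (s : ℝ) (n : ℕ) {p : ℕ}

variable (q p) in
noncomputable def qHermiteDICoeff (k : ℕ) : ℝ :=
  qFact q n * ((-1 : ℝ) ^ k * q ^ (p * (k * (k - 1) / 2)) * s ^ k /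
    (qPDoubleFact q p k * qFact q (n - p * k)))

variable (q p) in
lemma qHermiteDI_eq_sum :
    qHermiteDI q s n p =
      ∑ k ∈ range (n / p + 1), C (qHermiteDICoeff q s n p k) * X ^ (n - p * k) := by
  rw [qHermiteDI, mul_sum]
  exact sum_congr rfl fun k _ => by rw [qHermiteDICoeff, C_mul, mul_assoc (C _)]

lemma qNum_mul_qHermiteDICoeff_succ (hq : 0 ≤ q) (hp : p ≠ 0) {k : ℕ}
    (h : p * (k + 1) ≤ n) :
    qNum q (p * (k + 1)) * qHermiteDICoeff q s n p (k + 1) =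
      -(q ^ (p * k) * s * qDescFact q (n - p * k) p * qHermiteDICoeff q s n p k) := by
  have hfact : qFact q (n - p * (k + 1)) * qDescFact q (n - p * k) p = qFact q (n - p * k) := by
    have : n - p * (k + 1) + p = n - p * k := by rw [mul_add_one] at h ⊢; omega
    rw [← this, qFact_mul_qDescFact]
  have hdouble : qPDoubleFact q p (k + 1) = qPDoubleFact q p k * qNum q (p * (k + 1)) :=
    prod_range_succ _ _
  have hexp : p * ((k + 1) * (k + 1 - 1) / 2) = p * (k * (k - 1) / 2) + p * k := by
    rw [← Nat.choose_two_right, ← Nat.choose_two_right, Nat.choose_succ_succ',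
      Nat.choose_one_right, mul_add, add_comm]
  have hF : qFact q (n - p * (k + 1)) * qDescFact q (n - p * k) p ≠ 0 :=
    hfact ▸ (qFact_pos hq _).ne'
  have hF' := left_ne_zero_of_mul hF
  have hDesc := right_ne_zero_of_mul hF
  have hD := (qPDoubleFact_pos hq hp k).ne'
  have hN := (qNum_pos hq (mul_ne_zero hp k.succ_ne_zero)).ne'
  rw [qHermiteDICoeff, qHermiteDICoeff, hdouble, hexp, ← hfact]
  field_simp
  ring

lemma qHermiteDICoeff_recurrence (hq : 0 < q) (hp : p ≠ 0) {k : ℕ} (h : p * (k + 1) ≤ n) :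
    s * qHermiteDICoeff q s n p k * qDescFact q (n - p * k) p +
      q ^ ((p : ℤ) - n) * qHermiteDICoeff q s n p (k + 1) *
        (qNum q n - qNum q (n - p * (k + 1))) = 0 := by
  have hqNum :
      qNum q n - qNum q (n - p * (k + 1)) = q ^ (n - p * (k + 1)) * qNum q (p * (k + 1)) := by
    rw [sub_eq_iff_eq_add', ← qNum_add, Nat.sub_add_cancel h]
  have hpow : q ^ ((p : ℤ) - n) * q ^ (n - p * (k + 1)) * q ^ (p * k) = 1 := by
    rw [← zpow_natCast, ← zpow_natCast, ← zpow_add₀ hq.ne', ← zpow_add₀ hq.ne']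
    convert zpow_zero q
    push_cast [h]
    ring
  rw [hqNum]
  linear_combination -(s * qHermiteDICoeff q s n p k * qDescFact q (n - p * k) p) * hpow +
    q ^ ((p : ℤ) - n) * q ^ (n - p * (k + 1)) * qNum_mul_qHermiteDICoeff_succ s n hq.le hp h

end DoublyIndexedHermite

theorem qHermiteDI_difference_equation_general (q : ℝ) (hq0 : 0 < q) (s : ℝ) (n p : ℕ)
    (hp : 1 ≤ p) :
    Polynomial.C s * (qDeriv q)^[p] (qHermiteDI q s n p) -
        Polynomial.C (q ^ ((p : ℤ) - (n : ℤ))) * Polynomial.X * qDeriv q (qHermiteDI q s n p) +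
        Polynomial.C (q ^ ((p : ℤ) - (n : ℤ)) * qNum q n) * qHermiteDI q s n p = 0 := by
  set z := q ^ ((p : ℤ) - (n : ℤ))
  have hterm : ∀ a m, C s * (C (a * qDescFact q m p) * X ^ (m - p)) -
      C z * (C (a * qNum q m) * X ^ m) + C (z * qNum q n) * (C a * X ^ m) =
      C (s * a * qDescFact q m p) * X ^ (m - p) + C (z * a * (qNum q n - qNum q m)) * X ^ m :=
    fun a m => by simp only [map_mul, map_sub]; ring
  rw [mul_assoc (C z), qHermiteDI_eq_sum, qDeriv_iterate_sum, qDeriv_sum]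
  simp only [mul_sum, qDeriv_iterate_C_mul_X_pow, X_mul_qDeriv_C_mul_X_pow, ← sum_sub_distrib,
    ← sum_add_distrib, hterm]
  refine sum_range_succ_add_eq_zero_of_telescope _ _ _ (fun k hk => ?_) ?_ (by simp)
  · have h : p * (k + 1) ≤ n := by
      rw [mul_comm]; exact (Nat.le_div_iff_mul_le hp).mp hk
    rw [Nat.sub_sub, ← mul_add_one, ← add_mul, ← C_add,
      qHermiteDICoeff_recurrence s n hq0 (by omega) h, C_0, zero_mul]
  · rw [qDescFact_eq_zero_of_lt (by rw [← Nat.mod_eq_sub_mul_div]; exact Nat.mod_lt n hp),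
      mul_zero, C_0, zero_mul]

/-- `p`-th order q-difference equation:
`s·(D_q)^p H_{n,p}(x,s|q) - q^{p-n}·x·D_q H_{n,p}(x,s|q) + q^{p-n}·{n}_q·H_{n,p}(x,s|q) = 0`. -/
theorem qHermiteDI_difference_equation (q : ℝ) (hq0 : 0 < q) (hq1 : q < 1) (s : ℝ) (n p : ℕ)
    (hp : 1 ≤ p) :
    Polynomial.C s * (qDeriv q)^[p] (qHermiteDI q s n p) -
        Polynomial.C (q ^ ((p : ℤ) - (n : ℤ))) * Polynomial.X * qDeriv q (qHermiteDI q s n p) +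
        Polynomial.C (q ^ ((p : ℤ) - (n : ℤ)) * qNum q n) * qHermiteDI q s n p = 0 :=
  qHermiteDI_difference_equation_general q hq0 s n p hp
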